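/- For α ≥ 0, m ∈ ℕ, the function φ_m^{(α)}(x) = e^{-x²/2} L_m^{(α)}(x²) is an eigenfunction of the Hankel transform of order α with eigenvalue (-1)^m: H_α(φ_m^{(α)})(y) = (-1)^m φ_m^{(α)}(y) for all y ≥ 0. -/

import Mathlib

open MeasureTheory

/-- The generalized Laguerre polynomial of degree `m` and order `α`. -/
noncomputable def laguerre (α : ℝ) (m : ℕ) (x : ℝ) : ℝ :=
  ∑ k ∈ Finset.range (m + 1),
    (-1 : ℝ) ^ k * Real.Gamma ((m : ℝ) + α + 1) /
      (Real.Gamma ((k : ℝ) + α + 1) * (Nat.factorial (m - k)) * (Nat.factorial k)) * x ^ k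

/-- The Laguerre function `φ_m^{(α)}(x) = e^{-x²/2} L_m^{(α)}(x²)`. -/
noncomputable def laguerreFun (α : ℝ) (m : ℕ) (x : ℝ) : ℝ :=
  Real.exp (-x ^ 2 / 2) * laguerre α m (x ^ 2)

/-- The normalized Bessel function `j_α(w) = J_α(w)/w^α` on the reals. -/
noncomputable def besselNormR (α w : ℝ) : ℝ :=
  ∑' k : ℕ, (-1 : ℝ) ^ k * (2 : ℝ) ^ (-(α + 2 * (k : ℝ))) /
      (Real.Gamma ((k : ℝ) + 1) * Real.Gamma ((k : ℝ) + α + 1)) * w ^ (2 * k)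

/-!
Expand `j_α` in its power series and integrate term by term. Writing `L_m^{(α)}(x) = ∑ aₙ xⁿ`,
every integral is a Gaussian moment `∫₀^∞ e^{-x²/2} x^{2c+1} dx = 2^c Γ(c+1)`, and the `k`-th term
becomes `(∑ₙ aₙ 2ⁿ (α+k+1)ₙ) (-y²/2)ᵏ/k!`; the same computation with absolute values bounds it by
a polynomial in `k` times `(y²/2)ᵏ/k!`, which justifies the interchange. A Pochhammer identity,
proved by induction on `m`, rewrites the inner sum as `(-1)^m ∑ₙ aₙ (-2)ⁿ k(k-1)⋯(k-n+1)`, and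
`∑ₖ k(k-1)⋯(k-n+1) zᵏ/k! = zⁿ eᶻ` at `z = -y²/2` sums the series to
`(-1)^m e^{-y²/2} ∑ₙ aₙ y^{2n}`.
-/

open Finset Polynomial Real Set

lemma neg_one_lt_add_natCast {c : ℝ} (hc : -1 < c) (n : ℕ) : -1 < c + n := by
  linarith [Nat.cast_nonneg (α := ℝ) n]

lemma ascPochhammer_succ_eval_left (n : ℕ) (x : ℝ) :
    (ascPochhammer ℝ (n + 1)).eval x = x * (ascPochhammer ℝ n).eval (x + 1) := by
  simp [ascPochhammer_succ_left, eval_comp]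

lemma descPochhammer_succ_eval_left (n : ℕ) (x : ℝ) :
    (descPochhammer ℝ (n + 1)).eval x = x * (descPochhammer ℝ n).eval (x - 1) := by
  simp [descPochhammer_succ_left, eval_comp]

lemma Real.Gamma_add_nat_eq_mul_ascPochhammer {t : ℝ} (ht : ∀ k : ℕ, t + k ≠ 0) (n : ℕ) :
    Gamma (t + n) = Gamma t * (ascPochhammer ℝ n).eval t := by
  induction n with
  | zero => simp
  | succ n ih =>
    rw [Nat.cast_succ, ← add_assoc, Gamma_add_one (ht n), ih, ascPochhammer_succ_eval]
    ring

lemma ascPochhammer_eval_le_pow {x : ℝ} (hx : 0 < x) (n : ℕ) :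
    (ascPochhammer ℝ n).eval x ≤ (x + n) ^ n := by
  induction n with
  | zero => simp
  | succ n ih =>
    rw [ascPochhammer_succ_eval, pow_succ]
    calc (ascPochhammer ℝ n).eval x * (x + n) ≤ (x + n) ^ n * (x + n) := by gcongr
      _ ≤ (x + (n + 1 : ℕ)) ^ n * (x + (n + 1 : ℕ)) := by gcongr <;> simp

lemma summable_ascPochhammer_mul_pow_div_factorial {c : ℝ} (hc : 0 < c) (n : ℕ) (w : ℝ) :
    Summable fun k : ℕ => (ascPochhammer ℝ n).eval (c + k) * w ^ k / k.factorial := by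
  refine Summable.of_norm_bounded
    ((summable_pow_div_factorial (2 ^ n * |w|)).mul_left ((c + n + 1) ^ n)) fun k => ?_
  have hlin : c + k + n ≤ (c + n + 1) * 2 ^ k := by
    have : (k : ℝ) + 1 ≤ 2 ^ k := by exact_mod_cast Nat.lt_two_pow_self
    nlinarith
  have hpoch : (ascPochhammer ℝ n).eval (c + k) ≤ (c + n + 1) ^ n * (2 ^ n) ^ k :=
    calc _ ≤ (c + k + n) ^ n := ascPochhammer_eval_le_pow (by positivity) n
      _ ≤ ((c + n + 1) * 2 ^ k) ^ n := by gcongr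
      _ = _ := by rw [mul_pow, ← pow_mul, ← pow_mul, mul_comm k n]
  rw [norm_div, norm_mul, norm_pow, Real.norm_of_nonneg (ascPochhammer_pos n _ (by positivity)).le,
    Real.norm_natCast, Real.norm_eq_abs]
  calc _ ≤ (c + n + 1) ^ n * (2 ^ n) ^ k * |w| ^ k / k.factorial := by gcongr
    _ = _ := by ring

lemma hasSum_descPochhammer_mul_pow_div_factorial (n : ℕ) (z : ℝ) :
    HasSum (fun k : ℕ => (descPochhammer ℝ n).eval (k : ℝ) * z ^ k / k.factorial)
      (z ^ n * exp z) := by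
  refine (hasSum_nat_add_iff' n).mp ?_
  rw [sum_eq_zero fun i hi => by rw [descPochhammer_eval_coe_nat_of_lt (mem_range.mp hi)]; ring,
    sub_zero, exp_eq_exp_ℝ]
  refine ((NormedSpace.expSeries_div_hasSum_exp z).mul_left (z ^ n)).congr_fun fun j => ?_
  have hfac := Nat.factorial_mul_descFactorial (Nat.le_add_left n j)
  rw [Nat.add_sub_cancel] at hfac
  rw [descPochhammer_eval_eq_descFactorial, ← hfac, pow_add]
  push_cast
  field_simp

lemma integrableOn_exp_neg_sq_div_two_mul_rpow {c : ℝ} (hc : -1 < c) :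
    IntegrableOn (fun x : ℝ => exp (-x ^ 2 / 2) * x ^ (2 * c + 1)) (Ioi 0) := by
  convert integrableOn_rpow_mul_exp_neg_mul_sq (b := 1 / 2) (by norm_num) (s := 2 * c + 1)
    (by linarith) using 2
  ring_nf

lemma integral_exp_neg_sq_div_two_mul_rpow {c : ℝ} (hc : -1 < c) :
    ∫ x in Ioi (0 : ℝ), exp (-x ^ 2 / 2) * x ^ (2 * c + 1) = 2 ^ c * Gamma (c + 1) := by
  have h := integral_rpow_mul_exp_neg_mul_rpow (p := 2) (q := 2 * c + 1) (b := 1 / 2)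
    (by norm_num) (by linarith) (by norm_num)
  rw [show (-(2 * c + 1 + 1) / 2 : ℝ) = -(c + 1) by ring, show (2 * c + 1 + 1) / 2 = c + 1 by ring,
    one_div, inv_rpow zero_le_two, ← rpow_neg zero_le_two, neg_neg, rpow_add two_pos, rpow_one] at h
  calc _ = ∫ x in Ioi (0 : ℝ), x ^ (2 * c + 1) * exp (-2⁻¹ * x ^ (2 : ℝ)) :=
        setIntegral_congr_fun measurableSet_Ioi fun x _ => by rw [rpow_two]; ring_nf
    _ = _ := by rw [h]; ring

section GaussianMomentSums

variable (s : Finset ℕ) (b : ℕ → ℝ) {c : ℝ}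

lemma integrableOn_sum_mul_exp_neg_sq_div_two_mul_rpow (hc : -1 < c) :
    IntegrableOn (fun x => ∑ n ∈ s, b n * (exp (-x ^ 2 / 2) * x ^ (2 * (c + n) + 1))) (Ioi 0) :=
  integrable_finsetSum s fun n _ =>
    (integrableOn_exp_neg_sq_div_two_mul_rpow (neg_one_lt_add_natCast hc n)).const_mul (b n)

lemma integral_sum_mul_exp_neg_sq_div_two_mul_rpow (hc : -1 < c) :
    ∫ x in Ioi (0 : ℝ), ∑ n ∈ s, b n * (exp (-x ^ 2 / 2) * x ^ (2 * (c + n) + 1)) =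
      ∑ n ∈ s, b n * (2 ^ (c + n) * Gamma (c + n + 1)) := by
  rw [integral_finsetSum s fun n _ =>
    (integrableOn_exp_neg_sq_div_two_mul_rpow (neg_one_lt_add_natCast hc n)).const_mul (b n)]
  refine sum_congr rfl fun n _ => ?_
  rw [integral_const_mul, integral_exp_neg_sq_div_two_mul_rpow (neg_one_lt_add_natCast hc n)]

end GaussianMomentSums

/-- `m! (-1)ⁿ` times the `n`-th coefficient of `L_m^{(t)}`, written without `Γ` so that it is a
polynomial in `t` and the recursion `t ↦ t + 1` below needs no hypothesis on `t`. -/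
noncomputable def scaledLaguerreCoeff (t : ℝ) (m n : ℕ) : ℝ :=
  m.choose n * (ascPochhammer ℝ (m - n)).eval (t + n + 1)

lemma scaledLaguerreCoeff_eq_zero {t : ℝ} {m n : ℕ} (h : m < n) :
    scaledLaguerreCoeff t m n = 0 := by
  simp [scaledLaguerreCoeff, Nat.choose_eq_zero_of_lt h]

lemma scaledLaguerreCoeff_succ_zero (t : ℝ) (m : ℕ) :
    scaledLaguerreCoeff t (m + 1) 0 = (t + m + 1) * scaledLaguerreCoeff t m 0 := by
  simp only [scaledLaguerreCoeff, Nat.choose_zero_right, Nat.sub_zero, ascPochhammer_succ_eval]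
  push_cast
  ring

lemma scaledLaguerreCoeff_succ_succ (t : ℝ) (m n : ℕ) :
    scaledLaguerreCoeff t (m + 1) (n + 1) =
      (t + m + 1) * scaledLaguerreCoeff t m (n + 1) + scaledLaguerreCoeff (t + 1) m n := by
  rcases lt_or_ge n m with h | h
  · obtain ⟨j, rfl⟩ := Nat.exists_eq_add_of_lt h
    have h1 := ascPochhammer_succ_eval j (t + (n + 1) + 1)
    rw [scaledLaguerreCoeff, scaledLaguerreCoeff, scaledLaguerreCoeff,
      Nat.choose_succ_succ' (n + j + 1) n,
      show n + j + 1 + 1 - (n + 1) = j + 1 by omega, show n + j + 1 - (n + 1) = j by omega,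
      show n + j + 1 - n = j + 1 by omega]
    push_cast
    rw [show t + 1 + n + 1 = t + (n + 1) + 1 by ring, h1]
    ring
  rcases h.eq_or_lt with rfl | h
  · simp [scaledLaguerreCoeff]
  · simp [scaledLaguerreCoeff_eq_zero h, scaledLaguerreCoeff_eq_zero (by omega : m < n + 1),
      scaledLaguerreCoeff_eq_zero (by omega : m + 1 < n + 1)]

lemma scaledLaguerreCoeff_add_one_mul (t : ℝ) (m n : ℕ) :
    scaledLaguerreCoeff (t + 1) m n * (t + n + 1) = (t + m + 1) * scaledLaguerreCoeff t m n := by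
  rcases lt_or_ge m n with h | h
  · simp [scaledLaguerreCoeff_eq_zero h]
  obtain ⟨j, rfl⟩ := Nat.exists_eq_add_of_le h
  have h1 := ascPochhammer_succ_eval j (t + n + 1)
  rw [ascPochhammer_succ_eval_left] at h1
  simp only [scaledLaguerreCoeff, Nat.add_sub_cancel_left,
    show t + 1 + n + 1 = t + n + 1 + 1 by ring]
  push_cast
  linear_combination (n + j).choose n * h1

lemma sum_scaledLaguerreCoeff_succ (t : ℝ) (m : ℕ) (c : ℕ → ℝ) :
    ∑ n ∈ range (m + 2), scaledLaguerreCoeff t (m + 1) n * c n =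
      (t + m + 1) * ∑ n ∈ range (m + 1), scaledLaguerreCoeff t m n * c n +
        ∑ n ∈ range (m + 1), scaledLaguerreCoeff (t + 1) m n * c (n + 1) := by
  have hlast : ∑ n ∈ range (m + 1), scaledLaguerreCoeff t m (n + 1) * c (n + 1) =
      ∑ n ∈ range m, scaledLaguerreCoeff t m (n + 1) * c (n + 1) := by
    rw [sum_range_succ, scaledLaguerreCoeff_eq_zero (Nat.lt_succ_self m), zero_mul, add_zero]
  rw [sum_range_succ' _ (m + 1), sum_range_succ' (fun n => scaledLaguerreCoeff t m n * c n)]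
  simp only [scaledLaguerreCoeff_succ_succ, scaledLaguerreCoeff_succ_zero, add_mul, sum_add_distrib,
    mul_assoc, ← mul_sum, hlast]
  ring

/-- Both sides satisfy the recursion in `m` given by Pascal's rule (`sum_scaledLaguerreCoeff_succ`),
with `(t, s)` shifted to `(t + 1, s - 1)`. -/
theorem sum_scaledLaguerreCoeff_mul_ascPochhammer (m : ℕ) (t s : ℝ) :
    ∑ n ∈ range (m + 1),
        scaledLaguerreCoeff t m n * ((-2) ^ n * (ascPochhammer ℝ n).eval (t + s + 1)) =
      (-1) ^ m * ∑ n ∈ range (m + 1),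
        scaledLaguerreCoeff t m n * (2 ^ n * (descPochhammer ℝ n).eval s) := by
  induction m generalizing t s with
  | zero => simp [scaledLaguerreCoeff]
  | succ m ih =>
    have hasc : ∀ n ∈ range (m + 1), scaledLaguerreCoeff (t + 1) m n *
        ((-2) ^ (n + 1) * (ascPochhammer ℝ (n + 1)).eval (t + s + 1)) =
        -2 * (t + m + 1) * (scaledLaguerreCoeff t m n *
            ((-2) ^ n * (ascPochhammer ℝ n).eval (t + s + 1))) +
          -2 * s * (scaledLaguerreCoeff (t + 1) m n *
            ((-2) ^ n * (ascPochhammer ℝ n).eval (t + 1 + (s - 1) + 1))) := by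
      intro n _
      rw [ascPochhammer_succ_eval, show t + 1 + (s - 1) + 1 = t + s + 1 by ring, pow_succ]
      linear_combination (-2) ^ n * (ascPochhammer ℝ n).eval (t + s + 1) * (-2) *
        scaledLaguerreCoeff_add_one_mul t m n
    have hdesc : ∀ n ∈ range (m + 1), scaledLaguerreCoeff (t + 1) m n *
        (2 ^ (n + 1) * (descPochhammer ℝ (n + 1)).eval s) =
        2 * s * (scaledLaguerreCoeff (t + 1) m n *
          (2 ^ n * (descPochhammer ℝ n).eval (s - 1))) := by
      intro n _
      rw [descPochhammer_succ_eval_left, pow_succ]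
      ring
    rw [sum_scaledLaguerreCoeff_succ, sum_scaledLaguerreCoeff_succ, sum_congr rfl hasc,
      sum_congr rfl hdesc, sum_add_distrib, ← mul_sum, ← mul_sum, ← mul_sum, ih, ih]
    ring

noncomputable def laguerreCoeff (α : ℝ) (m n : ℕ) : ℝ :=
  (-1 : ℝ) ^ n * Gamma ((m : ℝ) + α + 1) /
    (Gamma ((n : ℝ) + α + 1) * (Nat.factorial (m - n)) * (Nat.factorial n))

lemma laguerre_eq_sum (α : ℝ) (m : ℕ) (x : ℝ) :
    laguerre α m x = ∑ n ∈ range (m + 1), laguerreCoeff α m n * x ^ n := rfl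

lemma laguerreCoeff_eq_scaledLaguerreCoeff {α : ℝ} (hα : -1 < α) {m n : ℕ} (hn : n ≤ m) :
    laguerreCoeff α m n = (-1) ^ n * scaledLaguerreCoeff α m n / m.factorial := by
  have hΓ : Gamma ((m : ℝ) + α + 1) =
      Gamma ((n : ℝ) + α + 1) * (ascPochhammer ℝ (m - n)).eval (α + n + 1) := by
    rw [show (m : ℝ) + α + 1 = (n + α + 1) + ((m - n : ℕ) : ℝ) by push_cast [hn]; ring,
      Real.Gamma_add_nat_eq_mul_ascPochhammer
        (fun k => by linarith [neg_one_lt_add_natCast (neg_one_lt_add_natCast hα n) k]),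
      show (n : ℝ) + α + 1 = α + n + 1 by ring]
  have hfac : (m.factorial : ℝ) = m.choose n * n.factorial * (m - n).factorial := by
    exact_mod_cast (Nat.choose_mul_factorial_mul_factorial hn).symm
  have hΓpos : 0 < Gamma ((n : ℝ) + α + 1) :=
    Gamma_pos_of_pos (by linarith [neg_one_lt_add_natCast hα n])
  have hchoose : (m.choose n : ℝ) ≠ 0 := by exact_mod_cast (Nat.choose_pos hn).ne'
  rw [laguerreCoeff, scaledLaguerreCoeff, hΓ, hfac]
  field_simp

theorem sum_laguerreCoeff_mul_ascPochhammer {α : ℝ} (hα : -1 < α) (m : ℕ) (s : ℝ) :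
    ∑ n ∈ range (m + 1), laguerreCoeff α m n * (2 ^ n * (ascPochhammer ℝ n).eval (α + s + 1)) =
      (-1) ^ m * ∑ n ∈ range (m + 1),
        laguerreCoeff α m n * ((-2) ^ n * (descPochhammer ℝ n).eval s) := by
  have hcoeff : ∀ n ∈ range (m + 1),
      laguerreCoeff α m n = (-1) ^ n * scaledLaguerreCoeff α m n / m.factorial :=
    fun n hn => laguerreCoeff_eq_scaledLaguerreCoeff hα (Nat.lt_succ_iff.mp (mem_range.mp hn))
  have hsign : ∀ n : ℕ, (-1 : ℝ) ^ n * (-2) ^ n = 2 ^ n := fun n => by rw [← mul_pow]; norm_num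
  have hsign' : ∀ n : ℕ, (-1 : ℝ) ^ n * 2 ^ n = (-2) ^ n := fun n => by rw [← mul_pow]; norm_num
  calc _ = (m.factorial : ℝ)⁻¹ * ∑ n ∈ range (m + 1),
          scaledLaguerreCoeff α m n * ((-2) ^ n * (ascPochhammer ℝ n).eval (α + s + 1)) := by
        rw [mul_sum]
        refine sum_congr rfl fun n hn => ?_
        rw [hcoeff n hn, ← hsign' n]
        ring
    _ = _ := by
        rw [sum_scaledLaguerreCoeff_mul_ascPochhammer, mul_sum, mul_sum, mul_sum]
        refine sum_congr rfl fun n hn => ?_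
        rw [hcoeff n hn, ← hsign n]
        ring

lemma laguerreFun_mul_rpow_eq_sum (α c : ℝ) (m : ℕ) {x : ℝ} (hx : 0 < x) :
    laguerreFun α m x * x ^ (2 * c + 1) =
      ∑ n ∈ range (m + 1), laguerreCoeff α m n * (exp (-x ^ 2 / 2) * x ^ (2 * (c + n) + 1)) := by
  rw [laguerreFun, laguerre_eq_sum, mul_sum, sum_mul]
  refine sum_congr rfl fun n _ => ?_
  rw [show 2 * (c + n) + 1 = ((2 * n : ℕ) : ℝ) + (2 * c + 1) by push_cast; ring,
    rpow_add hx ((2 * n : ℕ) : ℝ), rpow_natCast, pow_mul]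
  ring

section LaguerreMoments

variable (α : ℝ) (m : ℕ) {c : ℝ}

lemma integrableOn_laguerreFun_mul_rpow (hc : -1 < c) :
    IntegrableOn (fun x => laguerreFun α m x * x ^ (2 * c + 1)) (Ioi 0) :=
  (integrableOn_sum_mul_exp_neg_sq_div_two_mul_rpow _ _ hc).congr_fun
    (fun _ hx => (laguerreFun_mul_rpow_eq_sum α c m hx).symm) measurableSet_Ioi

lemma integral_laguerreFun_mul_rpow (hc : -1 < c) :
    ∫ x in Ioi (0 : ℝ), laguerreFun α m x * x ^ (2 * c + 1) =
      ∑ n ∈ range (m + 1), laguerreCoeff α m n * (2 ^ (c + n) * Gamma (c + n + 1)) := by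
  rw [setIntegral_congr_fun measurableSet_Ioi fun x hx => laguerreFun_mul_rpow_eq_sum α c m hx,
    integral_sum_mul_exp_neg_sq_div_two_mul_rpow _ _ hc]

lemma integral_norm_laguerreFun_mul_rpow_le (hc : -1 < c) :
    ∫ x in Ioi (0 : ℝ), ‖laguerreFun α m x * x ^ (2 * c + 1)‖ ≤
      ∑ n ∈ range (m + 1), |laguerreCoeff α m n| * (2 ^ (c + n) * Gamma (c + n + 1)) := by
  rw [← integral_sum_mul_exp_neg_sq_div_two_mul_rpow _ _ hc]
  refine setIntegral_mono_on (integrableOn_laguerreFun_mul_rpow α m hc).norm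
    (integrableOn_sum_mul_exp_neg_sq_div_two_mul_rpow _ _ hc) measurableSet_Ioi fun x hx => ?_
  rw [laguerreFun_mul_rpow_eq_sum α c m hx]
  refine (norm_sum_le _ _).trans_eq (sum_congr rfl fun n _ => ?_)
  rw [norm_mul, Real.norm_eq_abs,
    Real.norm_of_nonneg (mul_pos (exp_pos _) (rpow_pos_of_pos hx _)).le]

end LaguerreMoments

noncomputable def besselCoeff (α : ℝ) (k : ℕ) : ℝ :=
  (-1 : ℝ) ^ k * (2 : ℝ) ^ (-(α + 2 * (k : ℝ))) /
    (Gamma ((k : ℝ) + 1) * Gamma ((k : ℝ) + α + 1))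

lemma besselNormR_eq_tsum (α w : ℝ) : besselNormR α w = ∑' k : ℕ, besselCoeff α k * w ^ (2 * k) :=
  rfl

lemma besselCoeff_mul_two_rpow_mul_Gamma {α : ℝ} (hα : -1 < α) (k n : ℕ) :
    besselCoeff α k * (2 ^ (α + k + n) * Gamma (α + k + n + 1)) =
      2 ^ n * (ascPochhammer ℝ n).eval (α + k + 1) * ((-1 / 2) ^ k / k.factorial) := by
  have hΓ : Gamma (α + k + n + 1) = Gamma (α + k + 1) * (ascPochhammer ℝ n).eval (α + k + 1) := by
    rw [add_right_comm _ (n : ℝ), Real.Gamma_add_nat_eq_mul_ascPochhammer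
      (fun j => by linarith [neg_one_lt_add_natCast (neg_one_lt_add_natCast hα k) j])]
  have hpow : (2 : ℝ) ^ (-(α + 2 * (k : ℝ))) * 2 ^ (α + k + n) = 2 ^ n / 2 ^ k := by
    rw [← rpow_add two_pos, show -(α + 2 * (k : ℝ)) + (α + k + n) = n - k by ring,
      rpow_sub two_pos, rpow_natCast, rpow_natCast]
  have hΓpos : 0 < Gamma (α + k + 1) := Gamma_pos_of_pos (by linarith [neg_one_lt_add_natCast hα k])
  rw [besselCoeff, Gamma_nat_eq_factorial, hΓ, show (k : ℝ) + α + 1 = α + k + 1 by ring]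
  calc _ = (-1) ^ k * ((2 : ℝ) ^ (-(α + 2 * (k : ℝ))) * 2 ^ (α + k + n)) *
        (ascPochhammer ℝ n).eval (α + k + 1) / k.factorial := by
        field_simp
    _ = _ := by
        rw [hpow, div_pow]
        ring

noncomputable def hankelSeriesTerm (α : ℝ) (m : ℕ) (y : ℝ) (k : ℕ) (x : ℝ) : ℝ :=
  besselCoeff α k * y ^ (2 * k) * (laguerreFun α m x * x ^ (2 * (α + k) + 1))

section HankelSeries

variable (α : ℝ) (m : ℕ) (y : ℝ)

lemma laguerreFun_mul_besselNormR_mul_rpow_eq_tsum {x : ℝ} (hx : 0 < x) :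
    laguerreFun α m x * besselNormR α (x * y) * x ^ (2 * α + 1) =
      ∑' k : ℕ, hankelSeriesTerm α m y k x := by
  rw [besselNormR_eq_tsum, mul_comm (laguerreFun α m x), mul_assoc, ← tsum_mul_right]
  refine tsum_congr fun k => ?_
  rw [hankelSeriesTerm, show 2 * (α + k) + 1 = ((2 * k : ℕ) : ℝ) + (2 * α + 1) by push_cast; ring,
    rpow_add hx ((2 * k : ℕ) : ℝ), rpow_natCast, mul_pow]
  ring

lemma summable_integral_norm_hankelSeriesTerm (hα : -1 < α) :
    Summable fun k : ℕ => ∫ x in Ioi (0 : ℝ), ‖hankelSeriesTerm α m y k x‖ := by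
  have hbound : ∀ k : ℕ, ∫ x in Ioi (0 : ℝ), ‖hankelSeriesTerm α m y k x‖ ≤
      ∑ n ∈ range (m + 1), |laguerreCoeff α m n| * 2 ^ n *
        ((ascPochhammer ℝ n).eval (α + 1 + k) * (y ^ 2 / 2) ^ k / k.factorial) := by
    intro k
    simp only [hankelSeriesTerm, norm_mul (besselCoeff α k * y ^ (2 * k))]
    rw [integral_const_mul]
    refine (mul_le_mul_of_nonneg_left (integral_norm_laguerreFun_mul_rpow_le α m
      (neg_one_lt_add_natCast hα k)) (norm_nonneg _)).trans_eq ?_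
    rw [mul_sum]
    refine sum_congr rfl fun n _ => ?_
    have h := congr_arg abs (besselCoeff_mul_two_rpow_mul_Gamma hα k n)
    have hmoment : 0 < (2 : ℝ) ^ (α + k + n) * Gamma (α + k + n + 1) := mul_pos (by positivity)
      (Gamma_pos_of_pos (by linarith [neg_one_lt_add_natCast (neg_one_lt_add_natCast hα k) n]))
    simp only [abs_mul, abs_of_pos hmoment, abs_div, abs_pow, abs_neg, abs_one, abs_two,
      Nat.abs_cast, div_pow, one_pow] at h
    rw [abs_of_pos (ascPochhammer_pos n (α + k + 1)
      (by linarith [neg_one_lt_add_natCast hα k]))] at h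
    rw [norm_mul, Real.norm_eq_abs, pow_mul, Real.norm_of_nonneg (by positivity), div_pow,
      add_right_comm α 1]
    linear_combination |laguerreCoeff α m n| * (y ^ 2) ^ k * h
  refine Summable.of_nonneg_of_le (fun k => integral_nonneg fun x => norm_nonneg _) hbound
    (summable_sum fun n _ => ?_)
  exact (summable_ascPochhammer_mul_pow_div_factorial (by linarith) n _).mul_left _

lemma hasSum_integral_hankelSeriesTerm (hα : -1 < α) :
    HasSum (fun k : ℕ => ∫ x in Ioi (0 : ℝ), hankelSeriesTerm α m y k x)
      ((-1) ^ m * laguerreFun α m y) := by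
  have hterm : ∀ k : ℕ, ∫ x in Ioi (0 : ℝ), hankelSeriesTerm α m y k x =
      (-1) ^ m * ∑ n ∈ range (m + 1), laguerreCoeff α m n * (-2) ^ n *
        ((descPochhammer ℝ n).eval (k : ℝ) * (-y ^ 2 / 2) ^ k / k.factorial) := by
    intro k
    simp only [hankelSeriesTerm]
    rw [integral_const_mul, integral_laguerreFun_mul_rpow α m (neg_one_lt_add_natCast hα k)]
    calc _ = (∑ n ∈ range (m + 1), laguerreCoeff α m n *
          (2 ^ n * (ascPochhammer ℝ n).eval (α + k + 1))) * ((-y ^ 2 / 2) ^ k / k.factorial) := by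
          rw [mul_sum, sum_mul]
          refine sum_congr rfl fun n _ => ?_
          rw [show (-y ^ 2 / 2) ^ k = y ^ (2 * k) * (-1 / 2) ^ k by rw [pow_mul, ← mul_pow]; ring]
          linear_combination
            laguerreCoeff α m n * y ^ (2 * k) * besselCoeff_mul_two_rpow_mul_Gamma hα k n
      _ = _ := by
          rw [sum_laguerreCoeff_mul_ascPochhammer hα m k, mul_assoc, sum_mul]
          congr 1
          refine sum_congr rfl fun n _ => ?_
          ring
  have hsum := (hasSum_sum (s := range (m + 1)) fun n _ =>
    (hasSum_descPochhammer_mul_pow_div_factorial n (-y ^ 2 / 2)).mul_left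
      (laguerreCoeff α m n * (-2) ^ n)).mul_left ((-1 : ℝ) ^ m)
  have hvalue : laguerreFun α m y = ∑ n ∈ range (m + 1),
      laguerreCoeff α m n * (-2) ^ n * ((-y ^ 2 / 2) ^ n * exp (-y ^ 2 / 2)) := by
    rw [laguerreFun, laguerre_eq_sum, mul_sum]
    refine sum_congr rfl fun n _ => ?_
    rw [mul_assoc _ ((-2) ^ n), ← mul_assoc ((-2) ^ n), ← mul_pow]
    ring
  rw [hvalue]
  exact hsum.congr_fun hterm

end HankelSeries

/-- `φ_m^{(α)}` is an eigenfunction of the Hankel transform of order `α`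
with eigenvalue `(-1)^m`. -/
theorem laguerreFun_hankel_eigenfunction (α : ℝ) (hα : 0 ≤ α) (m : ℕ) :
    ∀ y : ℝ, 0 ≤ y →
      ∫ x in Set.Ioi (0 : ℝ),
          laguerreFun α m x * besselNormR α (x * y) * x ^ (2 * α + 1) =
        (-1 : ℝ) ^ m * laguerreFun α m y := by
  intro y _
  have hα' : -1 < α := by linarith
  calc _ = ∫ x in Ioi (0 : ℝ), ∑' k : ℕ, hankelSeriesTerm α m y k x :=
        setIntegral_congr_fun measurableSet_Ioi fun _ hx =>
          laguerreFun_mul_besselNormR_mul_rpow_eq_tsum α m y hx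
    _ = ∑' k : ℕ, ∫ x in Ioi (0 : ℝ), hankelSeriesTerm α m y k x :=
        (integral_tsum_of_summable_integral_norm (fun k =>
          (integrableOn_laguerreFun_mul_rpow α m (neg_one_lt_add_natCast hα' k)).const_mul _)
          (summable_integral_norm_hankelSeriesTerm α m y hα')).symm
    _ = _ := (hasSum_integral_hankelSeriesTerm α m y hα').tsum_eq
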